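/- arXiv:2006.11428 — 7 statements merged into one kernel-verified Lean document; each statement's English description precedes it below -/
import Mathlib

section
/- Let X be a Fréchet space and T : X → X a continuous linear operator. The following assertions are equivalent: (a) T is reiteratively hypercyclic; (b) T is hypercyclic and the set RRec(T) of reiteratively recurrent vectors is residual; (c) T is hypercyclic and RRec(T) is of second category; (d) T is hypercyclic and reiteratively recurrent; (e) T is hypercyclic and every hypercyclic vector for T is reiteratively hypercyclic; (f) T admits a vector that is both hypercyclic and reiteratively recurrent. In that case the set of vectors that are both hypercyclic and reiteratively recurrent is residual. -/
open Filter Topology Set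

noncomputable def lowerDensity (A : Set ℕ) : ℝ :=
  Filter.atTop.liminf fun N : ℕ => ((A ∩ Set.Iic N).ncard : ℝ) / (N + 1)

noncomputable def upperDensity (A : Set ℕ) : ℝ :=
  Filter.atTop.limsup fun N : ℕ => ((A ∩ Set.Iic N).ncard : ℝ) / (N + 1)

noncomputable def upperBanachDensity (A : Set ℕ) : ℝ :=
  Filter.atTop.limsup fun N : ℕ =>
    ⨆ m : ℕ, (((A ∩ Set.Icc m (m + N)).ncard : ℝ) / (N + 1))

/-- A set of naturals is syndetic if it has bounded gaps. -/
def Syndetic (A : Set ℕ) : Prop :=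
  ∃ m : ℕ, ∀ n : ℕ, ∃ k ∈ A, n ≤ k ∧ k < n + m

/-- A set of naturals is an IP-set if it contains all finite sums of distinct terms of some
strictly increasing sequence of positive integers. -/
def IsIPSet (A : Set ℕ) : Prop :=
  ∃ k : ℕ → ℕ, StrictMono k ∧ (∀ i, 0 < k i) ∧
    ∀ s : Finset ℕ, s.Nonempty → (∑ j ∈ s, k j) ∈ A

/-- A set of naturals is an IP*-set if it meets every IP-set. -/
def IsIPStarSet (A : Set ℕ) : Prop :=
  ∀ B : Set ℕ, IsIPSet B → (A ∩ B).Nonempty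

/-- The return set N(x,U) = {n : T^n x ∈ U}. -/
def returnSet {X : Type*} (T : X → X) (x : X) (U : Set X) : Set ℕ :=
  {n : ℕ | T^[n] x ∈ U}

def IsRecurrentVec {X : Type*} [TopologicalSpace X] (T : X → X) (x : X) : Prop :=
  ∀ U ∈ nhds x, (returnSet T x U).Infinite

def IsUniformlyRecurrentVec {X : Type*} [TopologicalSpace X] (T : X → X) (x : X) : Prop :=
  ∀ U ∈ nhds x, Syndetic (returnSet T x U)

def IsFrequentlyRecurrentVec {X : Type*} [TopologicalSpace X] (T : X → X) (x : X) : Prop :=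
  ∀ U ∈ nhds x, 0 < lowerDensity (returnSet T x U)

def IsUpperFrequentlyRecurrentVec {X : Type*} [TopologicalSpace X] (T : X → X) (x : X) : Prop :=
  ∀ U ∈ nhds x, 0 < upperDensity (returnSet T x U)

def IsReiterativelyRecurrentVec {X : Type*} [TopologicalSpace X] (T : X → X) (x : X) : Prop :=
  ∀ U ∈ nhds x, 0 < upperBanachDensity (returnSet T x U)

def IsIPStarRecurrentVec {X : Type*} [TopologicalSpace X] (T : X → X) (x : X) : Prop :=
  ∀ U ∈ nhds x, IsIPStarSet (returnSet T x U)

def IsHypercyclicVec {X : Type*} [TopologicalSpace X] (T : X → X) (x : X) : Prop :=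
  Dense (Set.range fun n : ℕ => T^[n] x)

def IsFrequentlyHypercyclicVec {X : Type*} [TopologicalSpace X] (T : X → X) (x : X) : Prop :=
  ∀ U : Set X, IsOpen U → U.Nonempty → 0 < lowerDensity (returnSet T x U)

def IsUpperFrequentlyHypercyclicVec {X : Type*} [TopologicalSpace X] (T : X → X) (x : X) : Prop :=
  ∀ U : Set X, IsOpen U → U.Nonempty → 0 < upperDensity (returnSet T x U)

def IsReiterativelyHypercyclicVec {X : Type*} [TopologicalSpace X] (T : X → X) (x : X) : Prop :=
  ∀ U : Set X, IsOpen U → U.Nonempty → 0 < upperBanachDensity (returnSet T x U)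

/-- Power boundedness: the iterates form an equicontinuous family (at zero). -/
def PowerBounded {X : Type*} [Zero X] [TopologicalSpace X] (T : X → X) : Prop :=
  ∀ W₁ ∈ nhds (0 : X), ∃ W₂ ∈ nhds (0 : X), ∀ n : ℕ, ∀ x ∈ W₂, T^[n] x ∈ W₁

/-- The cut-shift-and-paste property for a family of subsets of ℕ. -/
def CuSP (F : Set ℕ → Prop) : Prop :=
  ∀ q : ℕ, 0 < q → ∀ I : Fin q → Set ℕ, (⋃ j, I j) = Set.univ →
    ∀ shift : Fin q → ℕ, ∀ A : Set ℕ, F A →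
      F (⋃ j, (fun k => shift j + k) '' (A ∩ I j))

/-!
Once `T` has a hypercyclic vector, `X` is separable metrizable without isolated points, and
Birkhoff's transitivity argument makes the hypercyclic vectors residual.

The key point: if `x` is hypercyclic and `y ∈ U` is reiteratively recurrent, then for each
finite `F ⊆ N(y, U)` the orbit of `x` enters the open set `⋂ j ∈ F, T⁻ʲ U ∋ y` at some time `n`,
so `n + F ⊆ N(x, U)`. Upper Banach density is computed on finite windows, hence
`N(x, U)` is at least as dense as `N(y, U) > 0`. Thus a dense set of reiteratively recurrent
vectors makes every hypercyclic vector reiteratively hypercyclic, and the orbit of a vector that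
is both hypercyclic and reiteratively recurrent is such a dense set.
-/

section UpperBanachDensity

lemma ncard_inter_Icc_le (A : Set ℕ) (m N : ℕ) : (A ∩ Icc m (m + N)).ncard ≤ N + 1 :=
  (ncard_le_ncard inter_subset_right (finite_Icc _ _)).trans_eq <| by
    simp only [← Finset.coe_Icc, ncard_coe_finset, Nat.card_Icc]
    omega

lemma ncard_inter_Icc_div_le_one (A : Set ℕ) (m N : ℕ) :
    ((A ∩ Icc m (m + N)).ncard : ℝ) / (N + 1) ≤ 1 :=
  (div_le_one (by positivity)).2 <| by exact_mod_cast ncard_inter_Icc_le A m N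

lemma bddAbove_range_window (A : Set ℕ) (N : ℕ) :
    BddAbove (range fun m => ((A ∩ Icc m (m + N)).ncard : ℝ) / (N + 1)) :=
  ⟨1, forall_mem_range.2 fun m => ncard_inter_Icc_div_le_one A m N⟩

lemma isBoundedUnder_window (A : Set ℕ) :
    IsBoundedUnder (· ≤ ·) atTop fun N : ℕ => ⨆ m : ℕ, ((A ∩ Icc m (m + N)).ncard : ℝ) / (N + 1) :=
  isBoundedUnder_of ⟨1, fun N => ciSup_le fun m => ncard_inter_Icc_div_le_one A m N⟩

lemma isCoboundedUnder_window (A : Set ℕ) :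
    IsCoboundedUnder (· ≤ ·) atTop fun N : ℕ =>
      ⨆ m : ℕ, ((A ∩ Icc m (m + N)).ncard : ℝ) / (N + 1) :=
  isCoboundedUnder_le_of_le atTop fun N =>
    le_ciSup_of_le (bddAbove_range_window A N) 0 (by positivity)

lemma upperBanachDensity_le_of_translate {A B : Set ℕ}
    (h : ∀ F ⊆ B, F.Finite → ∃ n, (n + ·) '' F ⊆ A) :
    upperBanachDensity B ≤ upperBanachDensity A := by
  refine limsup_le_limsup (Eventually.of_forall fun N => ciSup_le fun m => ?_)
    (isCoboundedUnder_window B) (isBoundedUnder_window A)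
  obtain ⟨n, hn⟩ := h (B ∩ Icc m (m + N)) inter_subset_left ((finite_Icc _ _).inter_of_right _)
  refine le_ciSup_of_le (bddAbove_range_window A N) (n + m) ?_
  have hsub : (n + ·) '' (B ∩ Icc m (m + N)) ⊆ A ∩ Icc (n + m) (n + m + N) := by
    refine subset_inter hn ?_
    rintro _ ⟨j, ⟨-, hj⟩, rfl⟩
    simp only [mem_Icc] at hj ⊢
    omega
  have hcard : (B ∩ Icc m (m + N)).ncard ≤ (A ∩ Icc (n + m) (n + m + N)).ncard :=
    calc (B ∩ Icc m (m + N)).ncard = ((n + ·) '' (B ∩ Icc m (m + N))).ncard :=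
          (ncard_image_of_injective _ (add_right_injective n)).symm
      _ ≤ _ := ncard_le_ncard hsub ((finite_Icc _ _).inter_of_right _)
  gcongr

lemma upperBanachDensity_mono {A B : Set ℕ} (h : A ⊆ B) :
    upperBanachDensity A ≤ upperBanachDensity B :=
  upperBanachDensity_le_of_translate fun F hF _ => ⟨0, by simpa using hF.trans h⟩

lemma upperBanachDensity_empty : upperBanachDensity ∅ = 0 := by
  simp [upperBanachDensity]

lemma nonempty_of_upperBanachDensity_pos {A : Set ℕ} (h : 0 < upperBanachDensity A) :
    A.Nonempty :=
  nonempty_iff_ne_empty.2 fun hA => h.ne' (hA ▸ upperBanachDensity_empty)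

end UpperBanachDensity

section Dynamics

variable {X : Type*} {T : X → X}

lemma returnSet_iterate (x : X) (n : ℕ) (U : Set X) :
    returnSet T (T^[n] x) U = returnSet T x (T^[n] ⁻¹' U) := by
  ext k
  simp only [returnSet, mem_ofPred_eq, mem_preimage, ← Function.iterate_add_apply, add_comm]

variable [TopologicalSpace X]

lemma IsReiterativelyRecurrentVec.iterate (hT : Continuous T) {x : X}
    (hx : IsReiterativelyRecurrentVec T x) (n : ℕ) :
    IsReiterativelyRecurrentVec T (T^[n] x) := fun U hU => by
  rw [returnSet_iterate]
  exact hx _ ((hT.iterate n).continuousAt.preimage_mem_nhds hU)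

lemma IsReiterativelyHypercyclicVec.isHypercyclicVec {x : X}
    (hx : IsReiterativelyHypercyclicVec T x) : IsHypercyclicVec T x :=
  dense_iff_inter_open.2 fun U hU hne =>
    let ⟨n, hn⟩ := nonempty_of_upperBanachDensity_pos (hx U hU hne)
    ⟨T^[n] x, hn, n, rfl⟩

lemma IsReiterativelyHypercyclicVec.isReiterativelyRecurrentVec {x : X}
    (hx : IsReiterativelyHypercyclicVec T x) : IsReiterativelyRecurrentVec T x := fun U hU => by
  obtain ⟨V, hVU, hV, hxV⟩ := mem_nhds_iff.1 hU
  exact (hx V hV ⟨x, hxV⟩).trans_le (upperBanachDensity_mono fun n hn => hVU hn)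

lemma IsHypercyclicVec.dense_setOf {P : X → Prop} {x : X} (hx : IsHypercyclicVec T x)
    (hP : ∀ n, P (T^[n] x)) : Dense {y | P y} :=
  hx.mono <| range_subset_iff.2 hP

lemma exists_add_image_subset_returnSet (hT : Continuous T) {U : Set X} (hU : IsOpen U)
    {x y : X} (hx : IsHypercyclicVec T x) {F : Set ℕ} (hF : F.Finite)
    (hFy : F ⊆ returnSet T y U) : ∃ n, (n + ·) '' F ⊆ returnSet T x U := by
  have hW : IsOpen (⋂ j ∈ F, T^[j] ⁻¹' U) :=
    hF.isOpen_biInter fun j _ => hU.preimage (hT.iterate j)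
  obtain ⟨_, ⟨n, rfl⟩, hnW⟩ := hx.exists_mem_open hW ⟨y, mem_iInter₂.2 hFy⟩
  refine ⟨n, ?_⟩
  rintro _ ⟨j, hj, rfl⟩
  show T^[n + j] x ∈ U
  rw [add_comm, Function.iterate_add_apply]
  exact mem_iInter₂.1 hnW j hj

lemma IsHypercyclicVec.isReiterativelyHypercyclicVec (hT : Continuous T)
    (hd : Dense {y | IsReiterativelyRecurrentVec T y}) {x : X} (hx : IsHypercyclicVec T x) :
    IsReiterativelyHypercyclicVec T x := fun U hU hne => by
  obtain ⟨y, hy, hyU⟩ := hd.exists_mem_open hU hne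
  exact (hy U (hU.mem_nhds hyU)).trans_le <| upperBanachDensity_le_of_translate
    fun _ hFy hF => exists_add_image_subset_returnSet hT hU hx hF hFy

lemma IsHypercyclicVec.iterate [T1Space X] [∀ x : X, NeBot (𝓝[≠] x)] {x : X}
    (hx : IsHypercyclicVec T x) (m : ℕ) : IsHypercyclicVec T (T^[m] x) := by
  refine (hx.sdiff_finite ((finite_Iio m).image fun k => T^[k] x)).mono ?_
  rintro _ ⟨⟨n, rfl⟩, hn⟩
  have hmn : m ≤ n := not_lt.1 fun h => hn ⟨n, h, rfl⟩
  exact ⟨n - m, by simp only [← Function.iterate_add_apply, Nat.sub_add_cancel hmn]⟩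

lemma setOf_isHypercyclicVec_mem_residual_of_dense [SecondCountableTopology X] (hT : Continuous T)
    (hd : Dense {x | IsHypercyclicVec T x}) : {x | IsHypercyclicVec T x} ∈ residual X := by
  obtain ⟨B, hBc, -, hB⟩ := TopologicalSpace.exists_countable_basis X
  have hvisit : ∀ U ∈ B, U.Nonempty → ⋃ n, T^[n] ⁻¹' U ∈ residual X := fun U hU hne =>
    residual_of_dense_open (isOpen_iUnion fun n => (hB.isOpen hU).preimage (hT.iterate n))
      (hd.mono fun x hx => let ⟨_, ⟨n, rfl⟩, hn⟩ := hx.exists_mem_open (hB.isOpen hU) hne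
        mem_iUnion.2 ⟨n, hn⟩)
  refine mem_of_superset ((countable_bInter_mem (hBc.mono (sep_subset B _))).2 fun U hU =>
    hvisit U hU.1 hU.2) fun x hx => hB.dense_iff.2 fun U hU hne => ?_
  obtain ⟨n, hn⟩ := mem_iUnion.1 (mem_iInter₂.1 hx U ⟨hU, hne⟩)
  exact ⟨T^[n] x, hn, n, rfl⟩

lemma inter_nonempty_of_not_isMeagre_of_mem_residual {s t : Set X} (hs : ¬IsMeagre s)
    (ht : t ∈ residual X) : (s ∩ t).Nonempty :=
  nonempty_of_not_isMeagre fun h => hs <|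
    (h.union (show IsMeagre tᶜ by rwa [IsMeagre, compl_compl])).mono fun x hx =>
      (em (x ∈ t)).imp (⟨hx, ·⟩) id

end Dynamics

lemma IsHypercyclicVec.setOf_isHypercyclicVec_mem_residual (𝕜 : Type*) {X : Type*}
    [NontriviallyNormedField 𝕜] [AddCommGroup X] [Module 𝕜 X] [UniformSpace X]
    [IsUniformAddGroup X] [ContinuousSMul 𝕜 X] [TopologicalSpace.MetrizableSpace X] {T : X → X}
    {x : X} (hx : IsHypercyclicVec T x) (hT : Continuous T) :
    {x | IsHypercyclicVec T x} ∈ residual X := by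
  have : TopologicalSpace.SeparableSpace X := ⟨⟨_, countable_range _, hx⟩⟩
  have : (uniformity X).IsCountablyGenerated := IsUniformAddGroup.uniformity_countably_generated
  have := UniformSpace.secondCountable_of_separable X
  refine setOf_isHypercyclicVec_mem_residual_of_dense hT ?_
  rcases subsingleton_or_nontrivial X with _ | _
  · exact dense_univ.mono fun y _ => Subsingleton.elim x y ▸ hx
  · have := Module.punctured_nhds_neBot 𝕜 X
    exact hx.dense_setOf hx.iterate

theorem stmt0_general {𝕜 : Type*} [RCLike 𝕜] {X : Type*} [AddCommGroup X] [Module 𝕜 X]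
    [UniformSpace X] [IsUniformAddGroup X] [ContinuousSMul 𝕜 X] [CompleteSpace X]
    [TopologicalSpace.MetrizableSpace X] (T : X →L[𝕜] X) :
    [∃ x : X, IsReiterativelyHypercyclicVec (⇑T) x,
     (∃ x : X, IsHypercyclicVec (⇑T) x) ∧
       {x : X | IsReiterativelyRecurrentVec (⇑T) x} ∈ residual X,
     (∃ x : X, IsHypercyclicVec (⇑T) x) ∧
       ¬ IsMeagre {x : X | IsReiterativelyRecurrentVec (⇑T) x},
     (∃ x : X, IsHypercyclicVec (⇑T) x) ∧
       Dense {x : X | IsReiterativelyRecurrentVec (⇑T) x},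
     (∃ x : X, IsHypercyclicVec (⇑T) x) ∧
       (∀ x : X, IsHypercyclicVec (⇑T) x → IsReiterativelyHypercyclicVec (⇑T) x),
     ∃ x : X, IsHypercyclicVec (⇑T) x ∧ IsReiterativelyRecurrentVec (⇑T) x].TFAE ∧
    ((∃ x : X, IsReiterativelyHypercyclicVec (⇑T) x) →
      {x : X | IsHypercyclicVec (⇑T) x ∧ IsReiterativelyRecurrentVec (⇑T) x} ∈ residual X) := by
  have hT := T.continuous
  have : BaireSpace X :=
    have : (uniformity X).IsCountablyGenerated := IsUniformAddGroup.uniformity_countably_generated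
    inferInstance
  have hres {x : X} (hx : IsHypercyclicVec T x) := hx.setOf_isHypercyclicVec_mem_residual 𝕜 hT
  have hrrec {x : X} (hx : IsReiterativelyHypercyclicVec T x) :
      Dense {y | IsReiterativelyRecurrentVec T y} :=
    hx.isHypercyclicVec.dense_setOf (hx.isReiterativelyRecurrentVec.iterate hT)
  refine ⟨?_, fun ⟨x, hx⟩ => mem_of_superset (hres hx.isHypercyclicVec) fun y hy =>
    ⟨hy, (hy.isReiterativelyHypercyclicVec hT (hrrec hx)).isReiterativelyRecurrentVec⟩⟩
  tfae_have 1 → 6 := fun ⟨x, hx⟩ => ⟨x, hx.isHypercyclicVec, hx.isReiterativelyRecurrentVec⟩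
  tfae_have 6 → 4 := fun ⟨x, hx, hr⟩ => ⟨⟨x, hx⟩, hx.dense_setOf (hr.iterate hT)⟩
  tfae_have 4 → 5 := fun ⟨h, hd⟩ => ⟨h, fun _ hx => hx.isReiterativelyHypercyclicVec hT hd⟩
  tfae_have 5 → 1 := fun ⟨⟨x, hx⟩, h⟩ => ⟨x, h x hx⟩
  tfae_have 4 → 2 := fun ⟨⟨x, hx⟩, hd⟩ => ⟨⟨x, hx⟩, mem_of_superset (hres hx) fun _ hy =>
    (hy.isReiterativelyHypercyclicVec hT hd).isReiterativelyRecurrentVec⟩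
  tfae_have 2 → 3 := fun ⟨h, hr⟩ => ⟨h, not_isMeagre_of_mem_residual hr⟩
  tfae_have 3 → 6 := fun ⟨⟨x, hx⟩, hnm⟩ =>
    let ⟨y, hr, hc⟩ := inter_nonempty_of_not_isMeagre_of_mem_residual hnm (hres hx)
    ⟨y, hc, hr⟩
  tfae_finish

theorem stmt0 {𝕜 : Type*} [RCLike 𝕜] {X : Type*} [AddCommGroup X] [Module 𝕜 X]
    [UniformSpace X] [IsUniformAddGroup X] [ContinuousSMul 𝕜 X] [CompleteSpace X]
    [TopologicalSpace.MetrizableSpace X] [Module ℝ X] [IsScalarTower ℝ 𝕜 X]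
    [LocallyConvexSpace ℝ X] (T : X →L[𝕜] X) :
    [∃ x : X, IsReiterativelyHypercyclicVec (⇑T) x,
     (∃ x : X, IsHypercyclicVec (⇑T) x) ∧
       {x : X | IsReiterativelyRecurrentVec (⇑T) x} ∈ residual X,
     (∃ x : X, IsHypercyclicVec (⇑T) x) ∧
       ¬ IsMeagre {x : X | IsReiterativelyRecurrentVec (⇑T) x},
     (∃ x : X, IsHypercyclicVec (⇑T) x) ∧
       Dense {x : X | IsReiterativelyRecurrentVec (⇑T) x},
     (∃ x : X, IsHypercyclicVec (⇑T) x) ∧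
       (∀ x : X, IsHypercyclicVec (⇑T) x → IsReiterativelyHypercyclicVec (⇑T) x),
     ∃ x : X, IsHypercyclicVec (⇑T) x ∧ IsReiterativelyRecurrentVec (⇑T) x].TFAE ∧
    ((∃ x : X, IsReiterativelyHypercyclicVec (⇑T) x) →
      {x : X | IsHypercyclicVec (⇑T) x ∧ IsReiterativelyRecurrentVec (⇑T) x} ∈ residual X) :=
  stmt0_general T
end

section
/- Let X be a Fréchet space and T : X → X a continuous linear operator. Then T is frequently hypercyclic if and only if T admits a vector that is both hypercyclic and frequently recurrent. Moreover, every vector that is both hypercyclic and frequently recurrent for T is frequently hypercyclic. -/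
open Filter Topology Set

/-!
If `x` is hypercyclic, every non-empty open `U` contains some `T^m x`, so `V = T^{-m} U` is a
neighbourhood of `x`. Frequent recurrence makes `N(x, V)` have positive lower density, and
`N(x, U)` contains its translate `m + N(x, V)`, which still has positive lower density.
Conversely, a frequently hypercyclic vector visits every non-empty open set, so it is
hypercyclic, and it is trivially frequently recurrent.
-/

section LowerDensity

lemma ncard_inter_Iic_le (A : Set ℕ) (N : ℕ) : (A ∩ Iic N).ncard ≤ N + 1 := by
  calc (A ∩ Iic N).ncard ≤ (Iic N).ncard := ncard_le_ncard inter_subset_right (finite_Iic N)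
    _ = N + 1 := by rw [← Finset.coe_Iic, ncard_coe_finset, Nat.card_Iic]

lemma isBoundedUnder_ge_density (A : Set ℕ) :
    atTop.IsBoundedUnder (· ≥ ·) fun N : ℕ => ((A ∩ Iic N).ncard : ℝ) / (N + 1) :=
  isBoundedUnder_of ⟨0, fun _ => by positivity⟩

lemma isCoboundedUnder_ge_density (A : Set ℕ) :
    atTop.IsCoboundedUnder (· ≥ ·) fun N : ℕ => ((A ∩ Iic N).ncard : ℝ) / (N + 1) := by
  refine IsBoundedUnder.isCoboundedUnder_ge (isBoundedUnder_of ⟨1, fun N => ?_⟩)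
  rw [div_le_one (by positivity)]
  exact_mod_cast ncard_inter_Iic_le A N

lemma lowerDensity_mono {A B : Set ℕ} (h : A ⊆ B) : lowerDensity A ≤ lowerDensity B := by
  refine liminf_le_liminf (Eventually.of_forall fun N => ?_)
    (isBoundedUnder_ge_density A) (isCoboundedUnder_ge_density B)
  gcongr
  exact (finite_Iic N).subset inter_subset_right

lemma lowerDensity_pos_iff {A : Set ℕ} :
    0 < lowerDensity A ↔ ∃ δ > (0 : ℝ), ∀ᶠ N : ℕ in atTop, δ * (N + 1) ≤ (A ∩ Iic N).ncard := by
  have hratio (δ : ℝ) (N : ℕ) :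
      δ * (N + 1) ≤ (A ∩ Iic N).ncard ↔ δ ≤ ((A ∩ Iic N).ncard : ℝ) / (N + 1) :=
    (le_div_iff₀ (by positivity)).symm
  simp only [hratio]
  constructor
  · intro hpos
    refine ⟨lowerDensity A / 2, half_pos hpos, ?_⟩
    exact (eventually_lt_of_lt_liminf (half_lt_self hpos) (isBoundedUnder_ge_density A)).mono
      fun _ => le_of_lt
  · rintro ⟨δ, hδ, hev⟩
    exact hδ.trans_le (le_liminf_of_le (isCoboundedUnder_ge_density A) hev)

lemma ncard_inter_Iic_le_image_add (A : Set ℕ) (m N : ℕ) :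
    (A ∩ Iic N).ncard ≤ ((m + ·) '' A ∩ Iic (m + N)).ncard := by
  rw [← ncard_image_of_injective _ (add_right_injective m)]
  refine ncard_le_ncard ?_ ((finite_Iic _).subset inter_subset_right)
  rintro _ ⟨a, ⟨ha, haN⟩, rfl⟩
  exact ⟨mem_image_of_mem _ ha, by simp only [mem_Iic] at haN ⊢; omega⟩

lemma lowerDensity_image_add_pos {A : Set ℕ} (m : ℕ) (h : 0 < lowerDensity A) :
    0 < lowerDensity ((m + ·) '' A) := by
  obtain ⟨δ, hδ, hev⟩ := lowerDensity_pos_iff.mp h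
  obtain ⟨N₀, hN₀⟩ := eventually_atTop.mp hev
  refine lowerDensity_pos_iff.mpr ⟨δ / 2, half_pos hδ, eventually_atTop.mpr ⟨N₀ + 2 * m, ?_⟩⟩
  intro N hN
  obtain ⟨K, rfl⟩ := Nat.exists_eq_add_of_le (by omega : m ≤ N)
  have hK : δ * (K + 1) ≤ (A ∩ Iic K).ncard := hN₀ K (by omega)
  have hshift : ((A ∩ Iic K).ncard : ℝ) ≤ ((m + ·) '' A ∩ Iic (m + K)).ncard := by
    exact_mod_cast ncard_inter_Iic_le_image_add A m K
  have hmK : (m : ℝ) ≤ K := by exact_mod_cast (by omega : m ≤ K)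
  push_cast
  nlinarith

end LowerDensity

section Dynamics

variable {X : Type*} {T : X → X} {x : X}

lemma image_add_returnSet_preimage_iterate_subset (m : ℕ) (U : Set X) :
    (m + ·) '' returnSet T x (T^[m] ⁻¹' U) ⊆ returnSet T x U := by
  rintro _ ⟨k, hk, rfl⟩
  show T^[m + k] x ∈ U
  rwa [Function.iterate_add_apply]

variable [TopologicalSpace X]

lemma IsFrequentlyRecurrentVec.isFrequentlyHypercyclicVec (hT : Continuous T)
    (hfr : IsFrequentlyRecurrentVec T x) (hhc : IsHypercyclicVec T x) :
    IsFrequentlyHypercyclicVec T x := by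
  intro U hU hUne
  obtain ⟨_, ⟨m, rfl⟩, hmU⟩ := hhc.exists_mem_open hU hUne
  have hV : T^[m] ⁻¹' U ∈ 𝓝 x := (hU.preimage (hT.iterate m)).mem_nhds hmU
  exact (lowerDensity_image_add_pos m (hfr _ hV)).trans_le
    (lowerDensity_mono (image_add_returnSet_preimage_iterate_subset m U))

lemma IsFrequentlyHypercyclicVec.isHypercyclicVec (h : IsFrequentlyHypercyclicVec T x) :
    IsHypercyclicVec T x := by
  refine dense_iff_inter_open.mpr fun U hU hUne => ?_
  obtain ⟨δ, hδ, hev⟩ := lowerDensity_pos_iff.mp (h U hU hUne)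
  obtain ⟨N, hN⟩ := hev.exists
  have hcount : (0 : ℝ) < (returnSet T x U ∩ Iic N).ncard :=
    (by positivity : (0 : ℝ) < δ * (N + 1)).trans_le hN
  obtain ⟨n, hn, -⟩ := nonempty_of_ncard_ne_zero (Nat.cast_pos.mp hcount).ne'
  exact ⟨T^[n] x, hn, n, rfl⟩

lemma IsFrequentlyHypercyclicVec.isFrequentlyRecurrentVec (h : IsFrequentlyHypercyclicVec T x) :
    IsFrequentlyRecurrentVec T x := by
  intro U hU
  obtain ⟨V, hVU, hV, hxV⟩ := mem_nhds_iff.mp hU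
  exact (h V hV ⟨x, hxV⟩).trans_le (lowerDensity_mono fun _ hn => hVU hn)

end Dynamics

theorem stmt3_general {𝕜 : Type*} [RCLike 𝕜] {X : Type*} [AddCommGroup X] [Module 𝕜 X]
    [UniformSpace X] (T : X →L[𝕜] X) :
    ((∃ x : X, IsFrequentlyHypercyclicVec (⇑T) x) ↔
      (∃ x : X, IsHypercyclicVec (⇑T) x ∧ IsFrequentlyRecurrentVec (⇑T) x)) ∧
    (∀ x : X, IsHypercyclicVec (⇑T) x → IsFrequentlyRecurrentVec (⇑T) x →
      IsFrequentlyHypercyclicVec (⇑T) x) := by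
  have hfhc (x : X) (hhc : IsHypercyclicVec T x) (hfr : IsFrequentlyRecurrentVec T x) :=
    hfr.isFrequentlyHypercyclicVec T.continuous hhc
  refine ⟨⟨fun ⟨x, hx⟩ => ⟨x, hx.isHypercyclicVec, hx.isFrequentlyRecurrentVec⟩,
    fun ⟨x, hhc, hfr⟩ => ⟨x, hfhc x hhc hfr⟩⟩, hfhc⟩

theorem stmt3 {𝕜 : Type*} [RCLike 𝕜] {X : Type*} [AddCommGroup X] [Module 𝕜 X]
    [UniformSpace X] [IsUniformAddGroup X] [ContinuousSMul 𝕜 X] [CompleteSpace X]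
    [TopologicalSpace.MetrizableSpace X] [Module ℝ X] [IsScalarTower ℝ 𝕜 X]
    [LocallyConvexSpace ℝ X] (T : X →L[𝕜] X) :
    ((∃ x : X, IsFrequentlyHypercyclicVec (⇑T) x) ↔
      (∃ x : X, IsHypercyclicVec (⇑T) x ∧ IsFrequentlyRecurrentVec (⇑T) x)) ∧
    (∀ x : X, IsHypercyclicVec (⇑T) x → IsFrequentlyRecurrentVec (⇑T) x →
      IsFrequentlyHypercyclicVec (⇑T) x) :=
  stmt3_general T
end

section
/- Let X be a Fréchet space and T : X → X a continuous linear operator. Then no periodic point of T is an accumulation point of the orbit of a uniformly recurrent vector: if y is periodic for T and x is uniformly recurrent for T, then y is not an accumulation point of {T^n x : n ∈ ℕ}. In particular, no uniformly recurrent vector for T is hypercyclic. -/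
open Filter Topology Set

/-!
A periodic point `y` has a finite orbit. If `y` lies in the orbit closure of a uniformly recurrent
vector `x`, then `x` itself lies in the orbit of `y`, because the orbit of `x` would otherwise
stay away from `x` for arbitrarily long stretches. Hence the orbit of `x` is finite and has no
accumulation points. Since `0` is a fixed point and a nontrivial topological vector space has no
isolated points, a hypercyclic vector would have `0` as an accumulation point of its orbit.
-/

open Function

section

variable {X : Type*} {T : X → X}

lemma Function.IsPeriodicPt.finite_range_iterate {y : X} {p : ℕ} (hy : IsPeriodicPt T p y)
    (hp : 0 < p) : (range fun n => T^[n] y).Finite := by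
  refine ((finite_Iio p).image fun n => T^[n] y).subset ?_
  rintro _ ⟨n, rfl⟩
  exact ⟨n % p, Nat.mod_lt n hp, hy.iterate_mod_apply n⟩

variable [TopologicalSpace X]

/-- The return times to a neighbourhood of `x` disjoint from a neighbourhood `V` of `K` have gaps
`< m`, while orbit points close enough to `y` stay in `V` for `m` consecutive steps. -/
lemma IsUniformlyRecurrentVec.mem_of_mem_closure [T2Space X] (hT : Continuous T) {x y : X}
    (hx : IsUniformlyRecurrentVec T x) (hy : y ∈ closure (range fun n => T^[n] x)) {K : Set X}
    (hK : IsCompact K) (hTK : MapsTo T K K) (hyK : y ∈ K) : x ∈ K := by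
  by_contra hxK
  obtain ⟨U, V, hU, hV, hxU, hKV, hUV⟩ :=
    SeparatedNhds.of_isCompact_isCompact isCompact_singleton hK (disjoint_singleton_left.2 hxK)
  obtain ⟨m, hm⟩ := hx U (hU.mem_nhds (hxU rfl))
  have hyV : ∀ᶠ z in 𝓝 y, ∀ j ∈ Finset.range m, T^[j] z ∈ V :=
    (Filter.eventually_all_finset _).2 fun j _ =>
      (hT.iterate j).continuousAt.preimage_mem_nhds (hV.mem_nhds (hKV (hTK.iterate j hyK)))
  obtain ⟨_, hzV, n, rfl⟩ := mem_closure_iff_nhds.1 hy _ hyV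
  obtain ⟨t, htU, hnt, htm⟩ := hm n
  have htV : T^[t] x ∈ V := by
    have := hzV (t - n) (Finset.mem_range.2 (by omega))
    rwa [← iterate_add_apply, Nat.sub_add_cancel hnt] at this
  exact hUV.le_bot ⟨htU, htV⟩

lemma IsUniformlyRecurrentVec.not_accPt_of_isPeriodicPt [T2Space X] (hT : Continuous T)
    {x y : X} (hx : IsUniformlyRecurrentVec T x) {p : ℕ} (hy : IsPeriodicPt T p y) (hp : 0 < p) :
    ¬ AccPt y (𝓟 (range fun n => T^[n] x)) := by
  intro hacc
  have hK := hy.finite_range_iterate hp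
  obtain ⟨j, rfl⟩ : x ∈ range fun n => T^[n] y :=
    hx.mem_of_mem_closure hT (mem_closure_iff_clusterPt.2 hacc.clusterPt) hK.isCompact
      (by rintro _ ⟨n, rfl⟩; exact ⟨n + 1, iterate_succ_apply' T n y⟩) ⟨0, rfl⟩
  refine Set.Infinite.of_accPt hacc (hK.subset ?_)
  rintro _ ⟨n, rfl⟩
  exact ⟨n + j, iterate_add_apply T n j y⟩

lemma Dense.accPt [T1Space X] {s : Set X} (hs : Dense s) (x : X) [(𝓝[≠] x).NeBot] :
    AccPt x (𝓟 s) :=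
  accPt_principal_iff_nhdsWithin.2 (mem_closure_iff_nhdsWithin_neBot.1 ((hs.sdiff_singleton x) x))

end

theorem stmt5_general {𝕜 : Type*} [RCLike 𝕜] {X : Type*} [AddCommGroup X] [Module 𝕜 X]
    [UniformSpace X] [IsUniformAddGroup X] [ContinuousSMul 𝕜 X]
    [TopologicalSpace.MetrizableSpace X] [Nontrivial X] (T : X →L[𝕜] X) :
    (∀ y : X, (∃ n : ℕ, 1 ≤ n ∧ (⇑T)^[n] y = y) →
      ∀ x : X, IsUniformlyRecurrentVec (⇑T) x →
        ¬ AccPt y (Filter.principal (Set.range fun n : ℕ => (⇑T)^[n] x))) ∧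
    (∀ x : X, IsUniformlyRecurrentVec (⇑T) x → ¬ IsHypercyclicVec (⇑T) x) := by
  refine ⟨fun y ⟨p, hp, hy⟩ x hx => hx.not_accPt_of_isPeriodicPt T.continuous hy hp,
    fun x hx hdense => ?_⟩
  have := Module.punctured_nhds_neBot 𝕜 X (0 : X)
  exact hx.not_accPt_of_isPeriodicPt T.continuous (p := 1) (map_zero T) one_pos (hdense.accPt 0)

theorem stmt5 {𝕜 : Type*} [RCLike 𝕜] {X : Type*} [AddCommGroup X] [Module 𝕜 X]
    [UniformSpace X] [IsUniformAddGroup X] [ContinuousSMul 𝕜 X] [CompleteSpace X]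
    [TopologicalSpace.MetrizableSpace X] [Module ℝ X] [IsScalarTower ℝ 𝕜 X]
    [LocallyConvexSpace ℝ X] [Nontrivial X] (T : X →L[𝕜] X) :
    (∀ y : X, (∃ n : ℕ, 1 ≤ n ∧ (⇑T)^[n] y = y) →
      ∀ x : X, IsUniformlyRecurrentVec (⇑T) x →
        ¬ AccPt y (Filter.principal (Set.range fun n : ℕ => (⇑T)^[n] x))) ∧
    (∀ x : X, IsUniformlyRecurrentVec (⇑T) x → ¬ IsHypercyclicVec (⇑T) x) :=
  stmt5_general T
end

section
/- Let X be a topological vector space, T : X → X a continuous linear operator, and p ≥ 1 an integer. Then T and T^p have the same uniformly recurrent vectors, the same frequently recurrent vectors, the same upper frequently recurrent vectors, and the same reiteratively recurrent vectors. In particular, if T is uniformly recurrent (frequently recurrent, upper frequently recurrent, reiteratively recurrent) then so is T^p. -/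
open Filter Topology Set

/-!
Both directions move a largeness property of return sets along a map `f` with `a f(n) ≈ b n` up
to a bounded error (`CoarseDilation`). Such a map has fibres of bounded size and sends windows of
length `N` into windows of length `O(N)`, so it preserves syndeticity and the positivity of the
lower, upper and upper Banach densities. From `T^p` to `T` the map is `n ↦ p n`. Conversely, the
residues mod `p` of the times at which the orbit of `x` returns arbitrarily close to `x` form a
submonoid, hence a subgroup, of `ZMod p`. So a return time `n` into a small neighbourhood of `x`
can be extended, by a bounded return time `m ≡ -n`, to a return time `n + m ∈ pℕ` into `U`, and
`n ↦ (n + m) / p` maps return sets of `T` into return sets of `T^p`.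
-/

lemma Nat.le_add_of_mul_le_mul_add {b n n' K : ℕ} (hb : 0 < b) (h : b * n ≤ b * n' + K) :
    n ≤ n' + K := by
  by_contra! hlt
  nlinarith

lemma Filter.zero_lt_limsup_of_le_comp {α β : Type*} {l : Filter α} {l' : Filter β} [l.NeBot]
    {u : α → ℝ} {v : β → ℝ} {g : α → β} {C : ℝ} (hC : 0 < C) (hg : Tendsto g l l')
    (hu : ∀ n, 0 ≤ u n) (hv : ∀ n, v n ≤ 1) (huv : ∀ n, u n ≤ C * v (g n))
    (hpos : 0 < limsup u l) : 0 < limsup v l' := by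
  obtain ⟨δ, hδ, hδu⟩ := exists_between hpos
  have hfreq : ∃ᶠ n in l, δ / C ≤ v (g n) :=
    (frequently_lt_of_lt_limsup (isCoboundedUnder_le_of_le l hu) hδu).mono fun n hn =>
      (div_le_iff₀' hC).2 (hn.le.trans (huv n))
  exact (div_pos hδ hC).trans_le
    (le_limsup_of_frequently_le (hg.frequently hfreq) (isBoundedUnder_of ⟨1, hv⟩))

lemma AddSubmonoid.neg_mem_of_finite {G : Type*} [AddGroup G] [Finite G] (S : AddSubmonoid G)
    {g : G} (hg : g ∈ S) : -g ∈ S := by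
  have h : (addOrderOf g - 1) • g + g = 0 := by
    rw [← succ_nsmul, Nat.sub_add_cancel (addOrderOf_pos g), addOrderOf_nsmul_eq_zero]
  rw [← eq_neg_of_add_eq_zero_left h]
  exact S.nsmul_mem hg _

lemma tendsto_iterate_nhds_zero {Y F : Type*} [Zero Y] [TopologicalSpace Y] [FunLike F Y Y]
    [ZeroHomClass F Y Y] [ContinuousMapClass F Y Y] (T : F) (n : ℕ) :
    Tendsto (⇑T)^[n] (𝓝 0) (𝓝 0) := by
  simpa only [Function.iterate_fixed (map_zero T)] using ((map_continuous T).iterate n).tendsto 0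

noncomputable def windowCount (A : Set ℕ) (m N : ℕ) : ℕ :=
  (A ∩ Icc m (m + N)).ncard

noncomputable def windowDensity (A : Set ℕ) (m N : ℕ) : ℝ :=
  windowCount A m N / (N + 1)

lemma windowCount_le_succ (A : Set ℕ) (m N : ℕ) : windowCount A m N ≤ N + 1 :=
  (ncard_le_ncard inter_subset_right (finite_Icc _ _)).trans (by rw [ncard_Icc_nat]; omega)

lemma windowCount_mono (A : Set ℕ) (m : ℕ) {N K : ℕ} (h : N ≤ K) :
    windowCount A m N ≤ windowCount A m K :=
  ncard_le_ncard (inter_subset_inter_right _ (Icc_subset_Icc_right (by omega)))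
    ((finite_Icc _ _).inter_of_right _)

lemma windowDensity_nonneg (A : Set ℕ) (m N : ℕ) : 0 ≤ windowDensity A m N := by
  unfold windowDensity; positivity

lemma windowDensity_le_one (A : Set ℕ) (m N : ℕ) : windowDensity A m N ≤ 1 := by
  rw [windowDensity, div_le_one (by positivity)]
  exact_mod_cast windowCount_le_succ A m N

lemma bddAbove_range_windowDensity (A : Set ℕ) (N : ℕ) :
    BddAbove (range fun m => windowDensity A m N) :=
  ⟨1, forall_mem_range.2 fun m => windowDensity_le_one A m N⟩

lemma lowerDensity_eq_liminf (A : Set ℕ) :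
    lowerDensity A = liminf (windowDensity A 0) atTop := by
  unfold lowerDensity
  congr 1
  ext N
  rw [windowDensity, windowCount, zero_add, ← Nat.bot_eq_zero, Icc_bot]

lemma upperDensity_eq_limsup (A : Set ℕ) :
    upperDensity A = limsup (windowDensity A 0) atTop := by
  unfold upperDensity
  congr 1
  ext N
  rw [windowDensity, windowCount, zero_add, ← Nat.bot_eq_zero, Icc_bot]

lemma upperBanachDensity_eq_limsup (A : Set ℕ) :
    upperBanachDensity A = limsup (fun N => ⨆ m, windowDensity A m N) atTop := rfl

def CoarseDilation (a b M : ℕ) (f : ℕ → ℕ) (A B : Set ℕ) : Prop :=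
  ∀ n ∈ A, f n ∈ B ∧ a * f n ≤ b * n + M ∧ b * n ≤ a * f n + M

namespace CoarseDilation

variable {a b M : ℕ} {f : ℕ → ℕ} {A B : Set ℕ}

lemma mapsTo_window (hf : CoarseDilation a b M f A B) (ha : 0 < a) (m N : ℕ) :
    MapsTo f (A ∩ Icc m (m + N))
      (B ∩ Icc ((b * m - M) / a) ((b * m - M) / a + (b * N + 2 * M))) := by
  rintro n ⟨hnA, hmn, hnN⟩
  obtain ⟨hfB, hup, hlo⟩ := hf n hnA
  set q := (b * m - M) / a
  have hq : a * q ≤ b * m - M := Nat.mul_div_le _ a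
  have hq' : b * m - M < a * q + a := by simpa [mul_add] using Nat.lt_mul_div_succ (b * m - M) ha
  have hbm : b * m ≤ b * n := Nat.mul_le_mul_left b hmn
  have hbN : b * n ≤ b * m + b * N := by rw [← mul_add]; exact Nat.mul_le_mul_left b hnN
  have haK : b * N + 2 * M ≤ a * (b * N + 2 * M) := Nat.le_mul_of_pos_left _ ha
  refine ⟨hfB, Nat.le_of_mul_le_mul_left (by omega) ha,
    Nat.lt_succ_iff.1 (Nat.lt_of_mul_lt_mul_left (a := a) ?_)⟩
  rw [Nat.mul_succ, mul_add]
  omega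

lemma windowCount_le (hf : CoarseDilation a b M f A B) (ha : 0 < a) (hb : 0 < b) (m N : ℕ) :
    windowCount A m N ≤ (2 * M + 1) * windowCount B ((b * m - M) / a) (b * N + 2 * M) := by
  -- `n ↦ (f n, n mod (2M+1))` is injective on `A`: points with the same image under `f` lie
  -- within `2M` of each other.
  have hinj : InjOn (fun n => (f n, n % (2 * M + 1))) A := by
    intro n hn n' hn' heq
    simp only [Prod.mk.injEq] at heq
    obtain ⟨-, hup, hlo⟩ := hf n hn
    obtain ⟨-, hup', hlo'⟩ := hf n' hn'
    have h1 : n ≤ n' + 2 * M := Nat.le_add_of_mul_le_mul_add hb (by rw [← heq.1] at hup'; omega)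
    have h2 : n' ≤ n + 2 * M := Nat.le_add_of_mul_le_mul_add hb (by rw [heq.1] at hup; omega)
    refine Nat.ModEq.eq_of_abs_lt heq.2 (abs_sub_lt_iff.mpr ⟨?_, ?_⟩) <;> push_cast <;> omega
  calc windowCount A m N
      ≤ ((B ∩ Icc ((b * m - M) / a) ((b * m - M) / a + (b * N + 2 * M))) ×ˢ
          Iio (2 * M + 1)).ncard :=
        ncard_le_ncard_of_injOn _
          (fun n hn => ⟨hf.mapsTo_window ha m N hn, Nat.mod_lt _ (by omega)⟩)
          (hinj.mono inter_subset_left) (((finite_Icc _ _).inter_of_right _).prod (finite_Iio _))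
    _ = (2 * M + 1) * windowCount B ((b * m - M) / a) (b * N + 2 * M) := by
        rw [ncard_prod, windowCount, ncard_Iio_nat, mul_comm]

lemma windowDensity_le (hf : CoarseDilation a b M f A B) (ha : 0 < a) (hb : 0 < b)
    (m N K : ℕ) (hK : b * N + 2 * M ≤ K) (hK' : K + 1 ≤ (b + 2 * M) * (N + 1)) :
    windowDensity A m N ≤
      ((2 * M + 1) * (b + 2 * M) : ℕ) * windowDensity B ((b * m - M) / a) K := by
  have hcount := (hf.windowCount_le ha hb m N).trans
    (Nat.mul_le_mul_left (2 * M + 1) (windowCount_mono B ((b * m - M) / a) hK))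
  have key : windowCount A m N * (K + 1) ≤
      (2 * M + 1) * (b + 2 * M) * windowCount B ((b * m - M) / a) K * (N + 1) :=
    calc windowCount A m N * (K + 1)
        ≤ (2 * M + 1) * windowCount B ((b * m - M) / a) K * ((b + 2 * M) * (N + 1)) :=
          Nat.mul_le_mul hcount hK'
      _ = _ := by ring
  rw [windowDensity, windowDensity, mul_div_assoc',
    div_le_div_iff₀ (by positivity) (by positivity)]
  exact_mod_cast key

lemma windowDensity_le_dilate (hf : CoarseDilation a b M f A B) (ha : 0 < a) (hb : 0 < b)
    (m N : ℕ) :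
    windowDensity A m N ≤
      ((2 * M + 1) * (b + 2 * M) : ℕ) * windowDensity B ((b * m - M) / a) (b * N + 2 * M) :=
  hf.windowDensity_le ha hb m N _ le_rfl (by nlinarith)

lemma syndetic (hf : CoarseDilation a b M f A B) (ha : 0 < a) (hb : 0 < b) (hA : Syndetic A) :
    Syndetic B := by
  obtain ⟨g, hg⟩ := hA
  refine ⟨b + (b * g + 2 * M) + 1, fun n₀ => ?_⟩
  -- start a window of `A` at `m ≈ a n₀ / b`; its image under `f` starts at `q ∈ [n₀, n₀ + b]`
  set m := (a * n₀ + M) / b + 1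
  obtain ⟨k, hkA, hmk, hkm⟩ := hg m
  obtain ⟨hfB, hqk, hkq⟩ := hf.mapsTo_window ha m g ⟨hkA, hmk, by omega⟩
  set q := (b * m - M) / a
  have hm : a * n₀ + M < b * m := Nat.lt_mul_div_succ _ hb
  have hm' : b * m ≤ a * n₀ + M + b := by
    have := Nat.mul_div_le (a * n₀ + M) b
    rw [show b * m = b * ((a * n₀ + M) / b) + b by ring]
    omega
  have hq : n₀ ≤ q := (Nat.le_div_iff_mul_le ha).2 (by rw [mul_comm]; omega)
  have hab : b ≤ a * b := Nat.le_mul_of_pos_left b ha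
  have hq' : q ≤ n₀ + b := Nat.div_le_of_le_mul (by rw [Nat.mul_add a n₀ b]; omega)
  exact ⟨f k, hfB, hq.trans hqk, by omega⟩

lemma lowerDensity_pos (hf : CoarseDilation a b M f A B) (ha : 0 < a) (hb : 0 < b)
    (hA : 0 < lowerDensity A) : 0 < lowerDensity B := by
  rw [lowerDensity_eq_liminf] at hA ⊢
  set C : ℝ := (((2 * M + 1) * (b + 2 * M) : ℕ) : ℝ)
  have hC : 0 < C := by positivity
  obtain ⟨δ, hδ, hδA⟩ := exists_between hA
  obtain ⟨N₀, hN₀⟩ := eventually_atTop.1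
    (eventually_lt_of_lt_liminf hδA (isBoundedUnder_of ⟨0, windowDensity_nonneg A 0⟩))
  refine (div_pos hδ hC).trans_le (le_liminf_of_le
    (isCoboundedUnder_ge_of_le atTop (windowDensity_le_one B 0)) ?_)
  filter_upwards [eventually_ge_atTop (b * N₀ + 2 * M)] with K hK
  -- compare `[0, K]` for `B` with `[0, N]` for `A`, where `b N + 2M ≤ K < b (N + 1) + 2M`
  set N := (K - 2 * M) / b
  have hN : b * N ≤ K - 2 * M := Nat.mul_div_le _ b
  have hN' : K - 2 * M < b * (N + 1) := Nat.lt_mul_div_succ _ hb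
  have hN₀N : N₀ ≤ N := (Nat.le_div_iff_mul_le hb).2 (by rw [mul_comm]; omega)
  have h := hf.windowDensity_le ha hb 0 N K (by omega) (by
    have := Nat.le_mul_of_pos_right (2 * M) (show 0 < N + 1 by omega)
    rw [add_mul]; omega)
  rw [Nat.mul_zero, Nat.zero_sub, Nat.zero_div] at h
  rw [div_le_iff₀' hC]
  exact (hN₀ N hN₀N).le.trans h

lemma upperDensity_pos (hf : CoarseDilation a b M f A B) (ha : 0 < a) (hb : 0 < b)
    (hA : 0 < upperDensity A) : 0 < upperDensity B := by
  rw [upperDensity_eq_limsup] at hA ⊢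
  refine zero_lt_limsup_of_le_comp (g := fun N => b * N + 2 * M)
    (C := ((2 * M + 1) * (b + 2 * M) : ℕ)) (by positivity)
    (tendsto_atTop_mono (fun N => show N ≤ b * N + 2 * M by nlinarith) tendsto_id)
    (windowDensity_nonneg A 0) (windowDensity_le_one B 0) (fun N => ?_) hA
  simpa using hf.windowDensity_le_dilate ha hb 0 N

lemma upperBanachDensity_pos (hf : CoarseDilation a b M f A B) (ha : 0 < a) (hb : 0 < b)
    (hA : 0 < upperBanachDensity A) : 0 < upperBanachDensity B := by
  rw [upperBanachDensity_eq_limsup] at hA ⊢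
  refine zero_lt_limsup_of_le_comp (g := fun N => b * N + 2 * M)
    (C := ((2 * M + 1) * (b + 2 * M) : ℕ)) (by positivity)
    (tendsto_atTop_mono (fun N => show N ≤ b * N + 2 * M by nlinarith) tendsto_id)
    (fun N => (windowDensity_nonneg A 0 N).trans (le_ciSup (bddAbove_range_windowDensity A N) 0))
    (fun K => ciSup_le fun m => windowDensity_le_one B m K) (fun N => ciSup_le fun m => ?_) hA
  exact (hf.windowDensity_le_dilate ha hb m N).trans
    (mul_le_mul_of_nonneg_left (le_ciSup (bddAbove_range_windowDensity B _) _) (by positivity))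

end CoarseDilation

lemma coarseDilation_returnSet_iterate_returnSet {α : Type*} (T : α → α) (p : ℕ) (x : α)
    (U : Set α) : CoarseDilation 1 p 0 (p * ·) (returnSet T^[p] x U) (returnSet T x U) :=
  fun n hn => ⟨by simpa only [returnSet, mem_ofPred_eq, Function.iterate_mul] using hn,
    by dsimp only; omega, by dsimp only; omega⟩

section Dynamics

variable {X F : Type*} [AddCommGroup X] [TopologicalSpace X] [IsTopologicalAddGroup X]
  [FunLike F X X] [AddMonoidHomClass F X X]

lemma preimage_sub_mem_nhds {x : X} {W : Set X} (hW : W ∈ 𝓝 (0 : X)) :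
    (· - x) ⁻¹' W ∈ 𝓝 x :=
  tendsto_sub_nhds_zero_iff.2 tendsto_id hW

lemma exists_nhds_zero_iterate_mem (T : F) {x : X} {U : Set X} (hU : U ∈ 𝓝 x) :
    ∃ W ∈ 𝓝 (0 : X), ∀ n y, (⇑T)^[n] x - x ∈ W → (⇑T)^[n] (y - x) ∈ W → (⇑T)^[n] y ∈ U := by
  have hU₀ : (x + ·) ⁻¹' U ∈ 𝓝 (0 : X) :=
    (continuous_const_add x).tendsto' 0 x (add_zero x) hU
  obtain ⟨W, hW, hWU⟩ := exists_nhds_zero_half hU₀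
  refine ⟨W, hW, fun n y hx hy => ?_⟩
  have h : (⇑T)^[n] y = x + ((⇑T)^[n] x - x + (⇑T)^[n] (y - x)) := by
    rw [iterate_map_sub]; abel
  exact h ▸ hWU _ hx _ hy

variable [ContinuousMapClass F X X] (T : F)

def returnResidues (p : ℕ) (x : X) : AddSubmonoid (ZMod p) where
  carrier := {j | ∀ U ∈ 𝓝 x, ∃ n : ℕ, (n : ZMod p) = j ∧ (⇑T)^[n] x ∈ U}
  zero_mem' := fun _ hU => ⟨0, Nat.cast_zero, mem_of_mem_nhds hU⟩
  add_mem' := by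
    intro i j hi hj U hU
    obtain ⟨W, hW, hWU⟩ := exists_nhds_zero_iterate_mem T hU
    obtain ⟨n, rfl, hn⟩ := hi _ (preimage_sub_mem_nhds hW)
    obtain ⟨m, rfl, hm⟩ :=
      hj _ (preimage_sub_mem_nhds (inter_mem hW (tendsto_iterate_nhds_zero T n hW)))
    refine ⟨n + m, Nat.cast_add n m, ?_⟩
    rw [Function.iterate_add_apply]
    exact hWU n _ hn hm.2

lemma mem_returnResidues {p : ℕ} {x : X} {j : ZMod p} :
    j ∈ returnResidues T p x ↔ ∀ U ∈ 𝓝 x, ∃ n : ℕ, (n : ZMod p) = j ∧ (⇑T)^[n] x ∈ U :=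
  Iff.rfl

lemma exists_coarseDilation_returnSet_returnSet_iterate {p : ℕ} [NeZero p] {x : X} {U : Set X}
    (hU : U ∈ 𝓝 x) :
    ∃ V ∈ 𝓝 x, ∃ M f, CoarseDilation p 1 M f (returnSet T x V) (returnSet (⇑T)^[p] x U) := by
  obtain ⟨W, hW, hWU⟩ := exists_nhds_zero_iterate_mem T hU
  set R := returnResidues T p x
  have hchoice : ∀ j : ZMod p, ∃ g : ℕ, ∃ V ∈ 𝓝 x,
      (j ∈ R → (g : ZMod p) = -j ∧ (⇑T)^[g] x - x ∈ W) ∧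
        ∀ n : ℕ, (n : ZMod p) = j → (⇑T)^[n] x ∈ V → j ∈ R := by
    intro j
    by_cases hj : j ∈ R
    · obtain ⟨g, hg, hgW⟩ :=
        (mem_returnResidues T).1 (R.neg_mem_of_finite hj) _ (preimage_sub_mem_nhds hW)
      exact ⟨g, univ, univ_mem, fun _ => ⟨hg, hgW⟩, fun _ _ _ => hj⟩
    · have hj' := hj
      rw [mem_returnResidues] at hj'
      push Not at hj'
      obtain ⟨V, hV, hVj⟩ := hj'
      exact ⟨0, V, hV, fun h => absurd h hj, fun n hn hnV => absurd hnV (hVj n hn)⟩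
  choose g V hV hg using hchoice
  refine ⟨(⋂ j, V j) ∩ ⋂ j, (· - x) ⁻¹' ((⇑T)^[g j] ⁻¹' W),
    inter_mem (iInter_mem.2 hV)
      (iInter_mem.2 fun j => preimage_sub_mem_nhds (tendsto_iterate_nhds_zero T (g j) hW)),
    ∑ j, g j, fun n => (n + g n) / p, fun n hn => ?_⟩
  simp only [returnSet, mem_ofPred_eq, mem_inter_iff, mem_iInter, mem_preimage] at hn
  obtain ⟨hnV, hnW⟩ := hn
  obtain ⟨hgn, hgW⟩ := (hg n).1 ((hg n).2 n rfl (hnV n))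
  have hdvd : p ∣ n + g n := (ZMod.natCast_eq_zero_iff _ _).1 (by push_cast [hgn]; ring)
  have hmul : p * ((n + g n) / p) = n + g n := Nat.mul_div_cancel' hdvd
  have hle : g n ≤ ∑ j, g j := Finset.single_le_sum (fun _ _ => Nat.zero_le _) (Finset.mem_univ _)
  beta_reduce
  refine ⟨?_, by omega, by omega⟩
  show ((⇑T)^[p])^[(n + g n) / p] x ∈ U
  rw [← Function.iterate_mul, hmul, add_comm, Function.iterate_add_apply]
  exact hWU _ _ hgW (hnW n)

theorem forall_returnSet_iterate_iff {P : Set ℕ → Prop}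
    (hP : ∀ ⦃a b M f A B⦄, CoarseDilation a b M f A B → 0 < a → 0 < b → P A → P B)
    {p : ℕ} (hp : 0 < p) (x : X) :
    (∀ U ∈ 𝓝 x, P (returnSet (⇑T)^[p] x U)) ↔ ∀ U ∈ 𝓝 x, P (returnSet T x U) := by
  have : NeZero p := ⟨hp.ne'⟩
  refine ⟨fun h U hU => hP (coarseDilation_returnSet_iterate_returnSet T p x U) one_pos hp (h U hU),
    fun h U hU => ?_⟩
  obtain ⟨V, hV, M, f, hf⟩ := exists_coarseDilation_returnSet_returnSet_iterate T (p := p) hU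
  exact hP hf hp one_pos (h V hV)

end Dynamics

theorem stmt11_general {𝕜 : Type*} [RCLike 𝕜] {X : Type*} [AddCommGroup X] [Module 𝕜 X]
    [TopologicalSpace X] [IsTopologicalAddGroup X] (T : X →L[𝕜] X) (p : ℕ) (hp : 1 ≤ p) :
    (∀ x : X, IsUniformlyRecurrentVec ((⇑T)^[p]) x ↔ IsUniformlyRecurrentVec (⇑T) x) ∧
    (∀ x : X, IsFrequentlyRecurrentVec ((⇑T)^[p]) x ↔ IsFrequentlyRecurrentVec (⇑T) x) ∧
    (∀ x : X, IsUpperFrequentlyRecurrentVec ((⇑T)^[p]) x ↔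
      IsUpperFrequentlyRecurrentVec (⇑T) x) ∧
    (∀ x : X, IsReiterativelyRecurrentVec ((⇑T)^[p]) x ↔
      IsReiterativelyRecurrentVec (⇑T) x) ∧
    (Dense {x : X | IsUniformlyRecurrentVec (⇑T) x} →
      Dense {x : X | IsUniformlyRecurrentVec ((⇑T)^[p]) x}) ∧
    (Dense {x : X | IsFrequentlyRecurrentVec (⇑T) x} →
      Dense {x : X | IsFrequentlyRecurrentVec ((⇑T)^[p]) x}) ∧
    (Dense {x : X | IsUpperFrequentlyRecurrentVec (⇑T) x} →
      Dense {x : X | IsUpperFrequentlyRecurrentVec ((⇑T)^[p]) x}) ∧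
    (Dense {x : X | IsReiterativelyRecurrentVec (⇑T) x} →
      Dense {x : X | IsReiterativelyRecurrentVec ((⇑T)^[p]) x}) := by
  have hUR := forall_returnSet_iterate_iff T
    (fun _ _ _ _ _ _ => CoarseDilation.syndetic) hp
  have hFR := forall_returnSet_iterate_iff T
    (fun _ _ _ _ _ _ => CoarseDilation.lowerDensity_pos) hp
  have hUFR := forall_returnSet_iterate_iff T
    (fun _ _ _ _ _ _ => CoarseDilation.upperDensity_pos) hp
  have hRR := forall_returnSet_iterate_iff T
    (fun _ _ _ _ _ _ => CoarseDilation.upperBanachDensity_pos) hp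
  exact ⟨hUR, hFR, hUFR, hRR, fun hd => hd.mono fun x => (hUR x).2,
    fun hd => hd.mono fun x => (hFR x).2, fun hd => hd.mono fun x => (hUFR x).2,
    fun hd => hd.mono fun x => (hRR x).2⟩

theorem stmt11 {𝕜 : Type*} [RCLike 𝕜] {X : Type*} [AddCommGroup X] [Module 𝕜 X]
    [TopologicalSpace X] [IsTopologicalAddGroup X] [ContinuousSMul 𝕜 X] (T : X →L[𝕜] X) (p : ℕ) (hp : 1 ≤ p) :
    (∀ x : X, IsUniformlyRecurrentVec ((⇑T)^[p]) x ↔ IsUniformlyRecurrentVec (⇑T) x) ∧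
    (∀ x : X, IsFrequentlyRecurrentVec ((⇑T)^[p]) x ↔ IsFrequentlyRecurrentVec (⇑T) x) ∧
    (∀ x : X, IsUpperFrequentlyRecurrentVec ((⇑T)^[p]) x ↔
      IsUpperFrequentlyRecurrentVec (⇑T) x) ∧
    (∀ x : X, IsReiterativelyRecurrentVec ((⇑T)^[p]) x ↔
      IsReiterativelyRecurrentVec (⇑T) x) ∧
    (Dense {x : X | IsUniformlyRecurrentVec (⇑T) x} →
      Dense {x : X | IsUniformlyRecurrentVec ((⇑T)^[p]) x}) ∧
    (Dense {x : X | IsFrequentlyRecurrentVec (⇑T) x} →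
      Dense {x : X | IsFrequentlyRecurrentVec ((⇑T)^[p]) x}) ∧
    (Dense {x : X | IsUpperFrequentlyRecurrentVec (⇑T) x} →
      Dense {x : X | IsUpperFrequentlyRecurrentVec ((⇑T)^[p]) x}) ∧
    (Dense {x : X | IsReiterativelyRecurrentVec (⇑T) x} →
      Dense {x : X | IsReiterativelyRecurrentVec ((⇑T)^[p]) x}) :=
  stmt11_general T p hp
end

section
/- Let X be a Fréchet space and T : X → X a continuous linear operator. If T is power bounded, then the set of IP*-recurrent vectors for T coincides with the set of uniformly recurrent vectors: IP*Rec(T) = URec(T). -/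
open Filter Topology Set

/-! An IP*-set is syndetic because the complement of a non-syndetic set contains arbitrarily long
gaps, and an IP-set can be built inside such gaps. Conversely, if `x` is uniformly recurrent and
`T` is power bounded, the orbit of `x` is totally bounded: every `Tⁿ x` is close to one of
`x, T x, …, T^{g-1} x`. Given generators `kⱼ` of an IP-set, two partial sums `σ_M < σ_N` then
satisfy `T^{σ_N} x ≈ T^{σ_M} x`, and recurrence plus equicontinuity turn this into
`T^q x ≈ x` for the finite sum `q = σ_N - σ_M` of generators. -/

theorem Syndetic.exists_le_lt_add {A : Set ℕ} (hA : Syndetic A) (h0 : 0 ∈ A) :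
    ∃ g, ∀ n, ∃ r ∈ A, r ≤ n ∧ n < r + g := by
  obtain ⟨m, hm⟩ := hA
  refine ⟨m, fun n => ?_⟩
  by_cases hn : n < m
  · exact ⟨0, h0, Nat.zero_le n, by omega⟩
  · obtain ⟨r, hr, hr₁, hr₂⟩ := hm (n + 1 - m)
    exact ⟨r, hr, by omega, by omega⟩

theorem Syndetic.infinite {A : Set ℕ} (hA : Syndetic A) : A.Infinite := by
  obtain ⟨m, hm⟩ := hA
  refine Set.infinite_of_forall_exists_gt fun a => ?_
  obtain ⟨r, hr, hr₁, -⟩ := hm (a + 1)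
  exact ⟨r, hr, hr₁⟩

theorem exists_Icc_subset_compl_of_not_syndetic {A : Set ℕ} (hA : ¬Syndetic A) (s : ℕ) :
    ∃ n, s < n ∧ Icc n (n + s) ⊆ Aᶜ := by
  unfold Syndetic at hA
  push Not at hA
  obtain ⟨n, hn⟩ := hA (2 * s + 2)
  refine ⟨n + s + 1, by omega, fun j ⟨hj₁, hj₂⟩ hjA => ?_⟩
  have := hn j hjA (by omega)
  omega

/-- The generators are `k N = G (σ N)`, where `σ N` is the sum of the previous generators and
`G s > s` starts a gap of length `s + 1`: every finite sum with largest index `N` lies in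
`[k N, k N + σ N]`. -/
theorem IsIPSet.of_forall_exists_Icc_subset {C : Set ℕ}
    (hC : ∀ s, ∃ n, s < n ∧ Icc n (n + s) ⊆ C) : IsIPSet C := by
  choose G hG_gt hG_sub using hC
  let σ : ℕ → ℕ := fun N => Nat.rec 0 (fun _ s => s + G s) N
  let k : ℕ → ℕ := fun N => G (σ N)
  have hσ_succ : ∀ N, σ (N + 1) = σ N + k N := fun _ => rfl
  have hσ_sum : ∀ N, ∑ j ∈ Finset.range N, k j = σ N := by
    intro N
    induction N with
    | zero => rfl
    | succ N ih => rw [Finset.sum_range_succ, ih, hσ_succ]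
  refine ⟨k, strictMono_nat_of_lt_succ fun N => ?_, fun N => (Nat.zero_le _).trans_lt (hG_gt _),
    fun s hs => ?_⟩
  · calc k N ≤ σ (N + 1) := by rw [hσ_succ]; exact Nat.le_add_left _ _
      _ < k (N + 1) := hG_gt _
  · rw [← Finset.add_sum_erase s k (s.max'_mem hs)]
    set N := s.max' hs
    have hrest : ∑ j ∈ s.erase N, k j ≤ σ N := by
      rw [← hσ_sum]
      refine Finset.sum_le_sum_of_subset fun j hj => Finset.mem_range.2 ?_
      exact lt_of_le_of_ne (s.le_max' j (Finset.mem_of_mem_erase hj)) (Finset.ne_of_mem_erase hj)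
    exact hG_sub (σ N) ⟨Nat.le_add_right _ _, Nat.add_le_add_left hrest _⟩

theorem IsIPStarSet.syndetic {A : Set ℕ} (hA : IsIPStarSet A) : Syndetic A := by
  by_contra h
  obtain ⟨n, hnA, hnAc⟩ :=
    hA _ (IsIPSet.of_forall_exists_Icc_subset (exists_Icc_subset_compl_of_not_syndetic h))
  exact hnAc hnA

theorem IsUniformlyRecurrentVec.isRecurrentVec {X : Type*} [TopologicalSpace X] {T : X → X}
    {x : X} (hx : IsUniformlyRecurrentVec T x) : IsRecurrentVec T x :=
  fun U hU => (hx U hU).infinite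

section PowerBounded

variable {X F : Type*} [AddCommGroup X] [TopologicalSpace X] [IsTopologicalAddGroup X]
  [FunLike F X X] [AddMonoidHomClass F X X] {T : F} {x : X}

theorem IsUniformlyRecurrentVec.exists_iterate_sub_mem (hT : PowerBounded T)
    (hx : IsUniformlyRecurrentVec T x) {V : Set X} (hV : V ∈ 𝓝 0) :
    ∃ g, ∀ n, ∃ s < g, T^[n] x - T^[s] x ∈ V := by
  obtain ⟨W, hW, hWV⟩ := hT V hV
  have hxW : {y | y - x ∈ W} ∈ 𝓝 x :=
    (continuous_id.sub continuous_const).continuousAt.preimage_mem_nhds (by simpa using hW)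
  obtain ⟨g, hg⟩ := (hx _ hxW).exists_le_lt_add (by simpa [returnSet] using mem_of_mem_nhds hW)
  refine ⟨g, fun n => ?_⟩
  obtain ⟨r, hr, hrn, hnr⟩ := hg n
  refine ⟨n - r, by omega, ?_⟩
  have hshift : T^[n] x - T^[n - r] x = T^[n - r] (T^[r] x - x) := by
    rw [iterate_map_sub, ← Function.iterate_add_apply, Nat.sub_add_cancel hrn]
  rw [hshift]
  exact hWV _ _ hr

theorem IsUniformlyRecurrentVec.exists_lt_iterate_sub_mem (hT : PowerBounded T)
    (hx : IsUniformlyRecurrentVec T x) {V : Set X} (hV : V ∈ 𝓝 0) (u : ℕ → ℕ) :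
    ∃ M N, M < N ∧ T^[u N] x - T^[u M] x ∈ V := by
  obtain ⟨V', hV', hV'V⟩ := exists_nhds_half_neg hV
  obtain ⟨g, hg⟩ := hx.exists_iterate_sub_mem hT hV'
  choose s hsg hs using fun N => hg (u N)
  obtain ⟨M, N, hne, hMN⟩ := Finite.exists_ne_map_eq_of_infinite fun N => (⟨s N, hsg N⟩ : Fin g)
  have hclose : ∀ M N, s M = s N → T^[u N] x - T^[u M] x ∈ V := fun M N h => by
    simpa [h] using hV'V _ (hs N) _ (hs M)
  rcases hne.lt_or_gt with h | h
  · exact ⟨M, N, h, hclose M N (Fin.val_eq_of_eq hMN)⟩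
  · exact ⟨N, M, h, hclose N M (Fin.val_eq_of_eq hMN).symm⟩

/-- If `T^{a+q} x ≈ T^a x`, pick a return time `r > a` of `x`; then
`T^q x - x = T^q (x - T^r x) + T^{r-a} (T^{a+q} x - T^a x) + (T^r x - x)`. -/
theorem IsRecurrentVec.exists_iterate_sub_mem_of_iterate_add (hT : PowerBounded T)
    (hx : IsRecurrentVec T x) {W : Set X} (hW : W ∈ 𝓝 0) :
    ∃ V ∈ 𝓝 (0 : X), ∀ a q, T^[a + q] x - T^[a] x ∈ V → T^[q] x - x ∈ W := by
  obtain ⟨W', hW', hW'W⟩ := exists_nhds_zero_quarter hW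
  obtain ⟨V, hV, hVW'⟩ := hT W' hW'
  refine ⟨V, hV, fun a q haq => ?_⟩
  have hret : {y | x - y ∈ V} ∩ {y | y - x ∈ W'} ∈ 𝓝 x :=
    inter_mem
      ((continuous_const.sub continuous_id).continuousAt.preimage_mem_nhds (by simpa using hV))
      ((continuous_id.sub continuous_const).continuousAt.preimage_mem_nhds (by simpa using hW'))
  obtain ⟨r, ⟨hr₁, hr₂⟩, har⟩ := (hx _ hret).exists_gt a
  have hsplit : T^[q] x - x =
      T^[q] (x - T^[r] x) + T^[r - a] (T^[a + q] x - T^[a] x) + (T^[r] x - x) + 0 := by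
    simp only [iterate_map_sub, ← Function.iterate_add_apply]
    rw [show r - a + (a + q) = q + r by omega, Nat.sub_add_cancel har.le]
    abel
  rw [hsplit]
  exact hW'W (hVW' q _ hr₁) (hVW' _ _ haq) hr₂ (mem_of_mem_nhds hW')

theorem IsUniformlyRecurrentVec.isIPStarRecurrentVec (hT : PowerBounded T)
    (hx : IsUniformlyRecurrentVec T x) : IsIPStarRecurrentVec T x := by
  rintro U hU B ⟨k, -, -, hkB⟩
  have hW : {w | x + w ∈ U} ∈ 𝓝 (0 : X) :=
    (continuous_const.add continuous_id).continuousAt.preimage_mem_nhds (by simpa using hU)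
  obtain ⟨V, hV, hVW⟩ := hx.isRecurrentVec.exists_iterate_sub_mem_of_iterate_add hT hW
  obtain ⟨M, N, hMN, hclose⟩ :=
    hx.exists_lt_iterate_sub_mem hT hV fun N => ∑ j ∈ Finset.range N, k j
  rw [← Finset.sum_range_add_sum_Ico k hMN.le] at hclose
  refine ⟨∑ j ∈ Finset.Ico M N, k j, ?_, hkB _ (Finset.nonempty_Ico.2 hMN)⟩
  simpa [returnSet] using hVW _ _ hclose

end PowerBounded

theorem stmt16_general {𝕜 : Type*} [RCLike 𝕜] {X : Type*} [AddCommGroup X] [Module 𝕜 X]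
    [UniformSpace X] [IsUniformAddGroup X] (T : X →L[𝕜] X) (h : PowerBounded (⇑T)) :
    {x : X | IsIPStarRecurrentVec (⇑T) x} = {x : X | IsUniformlyRecurrentVec (⇑T) x} := by
  ext x
  exact ⟨fun hx U hU => (hx U hU).syndetic, fun hx => hx.isIPStarRecurrentVec h⟩

theorem stmt16 {𝕜 : Type*} [RCLike 𝕜] {X : Type*} [AddCommGroup X] [Module 𝕜 X]
    [UniformSpace X] [IsUniformAddGroup X] [ContinuousSMul 𝕜 X] [CompleteSpace X]
    [TopologicalSpace.MetrizableSpace X] [Module ℝ X] [IsScalarTower ℝ 𝕜 X]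
    [LocallyConvexSpace ℝ X] (T : X →L[𝕜] X) (h : PowerBounded (⇑T)) :
    {x : X | IsIPStarRecurrentVec (⇑T) x} = {x : X | IsUniformlyRecurrentVec (⇑T) x} :=
  stmt16_general T h
end

section
/- Let λ₁, …, λ_k be complex numbers of modulus 1 (k ≥ 1). Then, for any ε > 0, the set {n ∈ ℕ : max_{j=1,…,k} |λ_j^n − 1| < ε} is an IP*-set; in particular, it is a syndetic subset of ℕ. -/
open Filter Topology Set

/-!
Multiplication by `(λ_j)_j` is an isometry of `ℂ^k` (sup norm) whose orbit of `1` lies in the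
compact torus. For an isometry `T` one has `dist (T^[m + n] x) (T^[m] x) = dist (T^[n] x) x`, so two
`ε`-close orbit points `T^[a] x`, `T^[b] x` with `a < b` produce the return time `b - a`.
Taking `a, b` among the partial sums of an IP-sequence (pigeonhole in a totally bounded set) makes
`b - a` a finite sum of the sequence; taking `T^[a] x` in a finite `ε`-net `{T^[m] x : m ≤ M}` of
the orbit and `b = n + M` gives a return time in every window `[n, n + M]`.
-/

theorem Isometry.iterate {X : Type*} [PseudoEMetricSpace X] {T : X → X} (hT : Isometry T) :
    ∀ n : ℕ, Isometry T^[n]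
  | 0 => isometry_id
  | n + 1 => (hT.iterate n).comp hT

theorem Isometry.mul_left_of_norm_eq_one {R : Type*} [SeminormedRing R] [NormMulClass R] {a : R}
    (ha : ‖a‖ = 1) : Isometry (a * ·) :=
  Isometry.of_dist_eq fun b c => by
    rw [dist_eq_norm, ← mul_sub, norm_mul, ha, one_mul, dist_eq_norm]

section IsometryOrbit

variable {X : Type*} [PseudoMetricSpace X]

theorem TotallyBounded.exists_finset_forall_exists_dist_lt {ι : Type*} {f : ι → X}
    (h : TotallyBounded (range f)) {ε : ℝ} (hε : 0 < ε) :
    ∃ F : Finset ι, ∀ i, ∃ j ∈ F, dist (f i) (f j) < ε := by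
  obtain ⟨t, hts, htfin, hcover⟩ := Metric.finite_approx_of_totallyBounded h ε hε
  rw [← image_univ] at hts
  obtain ⟨s, -, hsfin, hcover⟩ := exists_subset_image_finite_and
    (p := fun t => range f ⊆ ⋃ y ∈ t, Metric.ball y ε) |>.1 ⟨t, hts, htfin, hcover⟩
  refine ⟨hsfin.toFinset, fun i => ?_⟩
  obtain ⟨_, ⟨j, hj, rfl⟩, hij⟩ := mem_iUnion₂.1 (hcover (mem_range_self i))
  exact ⟨j, hsfin.mem_toFinset.2 hj, hij⟩

theorem TotallyBounded.exists_lt_dist_lt {u : ℕ → X} (h : TotallyBounded (range u))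
    {ε : ℝ} (hε : 0 < ε) : ∃ m n, m < n ∧ dist (u m) (u n) < ε := by
  obtain ⟨F, hF⟩ := h.exists_finset_forall_exists_dist_lt (half_pos hε)
  choose c hcF hc using hF
  obtain ⟨m, n, hmn, hcmn⟩ := F.finite_toSet.exists_lt_map_eq_of_forall_mem hcF
  refine ⟨m, n, hmn, ?_⟩
  calc dist (u m) (u n) ≤ dist (u m) (u (c m)) + dist (u n) (u (c n)) := by
        rw [hcmn]; exact dist_triangle_right _ _ _
    _ < ε / 2 + ε / 2 := add_lt_add (hc m) (hc n)
    _ = ε := add_halves ε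

variable {T : X → X} {x : X}

theorem Isometry.dist_iterate_add_iterate (hT : Isometry T) (m n : ℕ) :
    dist (T^[m + n] x) (T^[m] x) = dist (T^[n] x) x := by
  rw [Function.iterate_add_apply]
  exact (hT.iterate m).dist_eq _ _

theorem isIPStarSet_returnSet_ball (hT : Isometry T)
    (h : TotallyBounded (range fun n => T^[n] x)) {ε : ℝ} (hε : 0 < ε) :
    IsIPStarSet (returnSet T x (Metric.ball x ε)) := by
  rintro B ⟨κ, -, -, hκ⟩
  let S : ℕ → ℕ := fun n => ∑ i ∈ Finset.range n, κ i
  have hS : TotallyBounded (range fun n => T^[S n] x) :=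
    h.subset (range_comp_subset_range S fun n => T^[n] x)
  obtain ⟨m, n, hmn, hdist⟩ := hS.exists_lt_dist_lt hε
  refine ⟨∑ i ∈ Finset.Ico m n, κ i, ?_, hκ _ ⟨m, Finset.left_mem_Ico.mpr hmn⟩⟩
  have hSn : S n = S m + ∑ i ∈ Finset.Ico m n, κ i :=
    (Finset.sum_range_add_sum_Ico κ hmn.le).symm
  show dist _ x < ε
  rwa [← hT.dist_iterate_add_iterate (S m), ← hSn, dist_comm]

theorem syndetic_returnSet_ball (hT : Isometry T)
    (h : TotallyBounded (range fun n => T^[n] x)) {ε : ℝ} (hε : 0 < ε) :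
    Syndetic (returnSet T x (Metric.ball x ε)) := by
  obtain ⟨F, hF⟩ := h.exists_finset_forall_exists_dist_lt hε
  refine ⟨F.sup id + 1, fun n => ?_⟩
  obtain ⟨m, hmF, hm⟩ := hF (n + F.sup id)
  have hmM : m ≤ F.sup id := Finset.le_sup (f := id) hmF
  refine ⟨n + F.sup id - m, ?_, by omega, by omega⟩
  show dist _ x < ε
  rwa [← hT.dist_iterate_add_iterate m, Nat.add_sub_cancel' (by omega)]

end IsometryOrbit

theorem stmt17_general (k : ℕ) (lam : Fin k → ℂ)
    (hlam : ∀ j, ‖lam j‖ = 1) (ε : ℝ) (hε : 0 < ε) :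
    IsIPStarSet {n : ℕ | ∀ j, ‖lam j ^ n - 1‖ < ε} ∧
    Syndetic {n : ℕ | ∀ j, ‖lam j ^ n - 1‖ < ε} := by
  let T : (Fin k → ℂ) → (Fin k → ℂ) := (lam * ·)
  have hT : Isometry T := Isometry.piMap _ fun j => Isometry.mul_left_of_norm_eq_one (hlam j)
  have horbit : TotallyBounded (range fun n => T^[n] 1) := by
    refine (isCompact_univ_pi fun _ => isCompact_sphere (0 : ℂ) 1).totallyBounded.subset ?_
    rintro _ ⟨n, rfl⟩ j -
    simp [T, norm_pow, hlam j]
  have hreturn : returnSet T 1 (Metric.ball 1 ε) = {n : ℕ | ∀ j, ‖lam j ^ n - 1‖ < ε} := by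
    ext n
    simp only [returnSet, T, mul_left_iterate_apply, mul_one, mem_ofPred_eq, Metric.mem_ball,
      dist_pi_lt_iff hε, Pi.pow_apply, Pi.one_apply, Complex.dist_eq]
  rw [← hreturn]
  exact ⟨isIPStarSet_returnSet_ball hT horbit hε, syndetic_returnSet_ball hT horbit hε⟩

theorem stmt17 (k : ℕ) (hk : 1 ≤ k) (lam : Fin k → ℂ)
    (hlam : ∀ j, ‖lam j‖ = 1) (ε : ℝ) (hε : 0 < ε) :
    IsIPStarSet {n : ℕ | ∀ j, ‖lam j ^ n - 1‖ < ε} ∧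
    Syndetic {n : ℕ | ∀ j, ‖lam j ^ n - 1‖ < ε} :=
  stmt17_general k lam hlam ε hε
end

section
/- Let X be a complex Fréchet space and T : X → X a continuous linear operator. Let E(T) = ⋃_{λ∈𝕋} ker(T − λI) be the set of unimodular eigenvectors of T. Then span E(T) ⊆ IP*Rec(T). In particular, if span E(T) is dense in X then T is IP*-recurrent, and hence uniformly recurrent. -/
open Filter Topology Set

/-! An IP*-set is syndetic: a non-syndetic set has arbitrarily long gaps arbitrarily far out,
so a rapidly increasing sequence can be chosen whose finite sums all fall into gaps, which makes
the complement an IP-set.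

The orbit of `1` under a rotation `g` of a compact group has a cluster point, so along the
partial sums `S m` of any IP-sequence two powers `g ^ S m₁`, `g ^ S m₂` come close; then
`g ^ (S m₂ - S m₁)` is close to `1`, and `S m₂ - S m₁` lies in the IP-set. A finite combination
`x = ∑ cᵢ vᵢ` of unimodular eigenvectors is the image of `1` under the continuous map
`z ↦ ∑ cᵢ zᵢ vᵢ` on the torus, which intertwines the rotation by the eigenvalues with `T`. -/

theorem Finset.sum_mem_Icc_max' {M : Type*} [AddCommMonoid M] [PartialOrder M]
    [IsOrderedAddMonoid M] [CanonicallyOrderedAdd M] (k : ℕ → M) {s : Finset ℕ}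
    (hs : s.Nonempty) :
    ∑ j ∈ s, k j ∈
      Set.Icc (k (s.max' hs)) (k (s.max' hs) + ∑ j ∈ Finset.range (s.max' hs), k j) := by
  have hmax := s.max'_mem hs
  rw [← Finset.add_sum_erase s k hmax]
  refine ⟨le_self_add, add_le_add_right (Finset.sum_le_sum_of_subset fun j hj => ?_) _⟩
  exact Finset.mem_range.2 <|
    (s.le_max' j (Finset.mem_of_mem_erase hj)).lt_of_ne (Finset.ne_of_mem_erase hj)

theorem IsIPStarSet.mono {A B : Set ℕ} (hA : IsIPStarSet A) (hAB : A ⊆ B) : IsIPStarSet B :=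
  fun C hC => (hA C hC).mono (inter_subset_inter_left C hAB)

theorem exists_gap_of_not_syndetic {A : Set ℕ} (hA : ¬ Syndetic A) (b : ℕ) :
    ∃ n, b < n ∧ ∀ j ∈ Icc n (n + b), j ∉ A := by
  simp only [Syndetic, not_exists, not_forall, not_and, not_lt] at hA
  obtain ⟨n, hn⟩ := hA (2 * b + 2)
  exact ⟨n + b + 1, by omega, fun j ⟨hj₁, hj₂⟩ hjA => by have := hn j hjA (by omega); omega⟩

theorem isIPSet_compl_of_not_syndetic {A : Set ℕ} (hA : ¬ Syndetic A) : IsIPSet Aᶜ := by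
  choose next hnext hgap using exists_gap_of_not_syndetic hA
  -- Term `i` starts a gap of length `S i` (the sum of the earlier terms), so every finite sum
  -- whose largest index is `i` lands in that gap.
  let S : ℕ → ℕ := fun i => Nat.rec 0 (fun _ s => s + next s) i
  have hS : ∀ i, S i = ∑ j ∈ Finset.range i, next (S j) := by
    intro i
    induction i with
    | zero => rfl
    | succ i ih => rw [Finset.sum_range_succ, ← ih]
  refine ⟨fun i => next (S i), strictMono_nat_of_lt_succ fun i => ?_,
    fun i => (Nat.zero_le _).trans_lt (hnext _), fun s hs => ?_⟩
  · exact (Nat.le_add_left _ (S i)).trans_lt (hnext (S (i + 1)))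
  · have hsum := Finset.sum_mem_Icc_max' (fun i => next (S i)) hs
    rw [← hS] at hsum
    exact hgap _ _ hsum

theorem isIPStarSet_setOf_pow_mem {G : Type*} [Group G] [TopologicalSpace G]
    [IsTopologicalGroup G] [CompactSpace G] (g : G) {U : Set G} (hU : U ∈ 𝓝 1) :
    IsIPStarSet {n | g ^ n ∈ U} := by
  rintro B ⟨k, -, -, hkB⟩
  let S : ℕ → ℕ := fun m => ∑ j ∈ Finset.range m, k j
  obtain ⟨L, -, hL⟩ := isCompact_univ.exists_mapClusterPt (f := atTop) (u := fun m => g ^ S m)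
    (by simp)
  have hdiv : ∀ᶠ p : G × G in 𝓝 (L, L), p.1⁻¹ * p.2 ∈ U :=
    (continuous_fst.inv.mul continuous_snd).continuousAt.preimage_mem_nhds
      (by simpa using hU)
  rw [nhds_prod_eq] at hdiv
  obtain ⟨V, hV, hVV⟩ := eventually_prod_self_iff (r := fun a b => a⁻¹ * b ∈ U) |>.1 hdiv
  obtain ⟨m₁, -, hm₁⟩ := frequently_atTop.1 (hL.frequently hV) 0
  obtain ⟨m₂, hm₁₂, hm₂⟩ := frequently_atTop.1 (hL.frequently hV) (m₁ + 1)
  refine ⟨∑ j ∈ Finset.Ico m₁ m₂, k j, ?_, hkB _ (Finset.nonempty_Ico.2 (by omega))⟩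
  have hS : S m₂ = S m₁ + ∑ j ∈ Finset.Ico m₁ m₂, k j :=
    (Finset.sum_range_add_sum_Ico k (by omega)).symm
  simpa [hS, pow_add] using hVV _ hm₁ _ hm₂

theorem isIPStarRecurrentVec_of_semiconj {G X : Type*} [Group G] [TopologicalSpace G]
    [IsTopologicalGroup G] [CompactSpace G] [TopologicalSpace X] {T : X → X} {φ : G → X}
    (hφ : Continuous φ) {g : G} (h : Function.Semiconj φ (g * ·) T) :
    IsIPStarRecurrentVec T (φ 1) := by
  intro U hU
  refine (isIPStarSet_setOf_pow_mem g (hφ.continuousAt.preimage_mem_nhds hU)).mono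
    fun n hn => ?_
  change T^[n] (φ 1) ∈ U
  rw [← (h.iterate_right n).eq, mul_left_iterate]
  simpa using hn

theorem isIPStarRecurrentVec_of_mem_span_unimodular_eigenvectors {X : Type*} [AddCommGroup X]
    [Module ℂ X] [TopologicalSpace X] [ContinuousAdd X] [ContinuousSMul ℂ X] (T : X →L[ℂ] X)
    {x : X} (hx : x ∈ Submodule.span ℂ {x : X | ∃ a : ℂ, ‖a‖ = 1 ∧ T x = a • x}) :
    IsIPStarRecurrentVec T x := by
  obtain ⟨n, c, v, rfl⟩ := Submodule.mem_span_set'.1 hx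
  choose a ha hTa using fun i => (v i).2
  let g : Fin n → Circle := fun i => ⟨a i, mem_sphere_zero_iff_norm.2 (ha i)⟩
  let φ : (Fin n → Circle) → X := fun z => ∑ i, c i • z i • (v i : X)
  have hφ : Continuous φ := by fun_prop
  have hsemi : Function.Semiconj φ (g * ·) T := fun z => by
    simp only [φ, map_sum, map_smul, Circle.smul_def, hTa, smul_smul, Pi.mul_apply, Circle.coe_mul]
    exact Finset.sum_congr rfl fun i _ => by congr 1; simp only [g]; ring
  simpa [φ] using isIPStarRecurrentVec_of_semiconj hφ hsemi

theorem stmt18_general {X : Type*} [AddCommGroup X] [Module ℂ X]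
    [UniformSpace X] [IsUniformAddGroup X] [ContinuousSMul ℂ X] (T : X →L[ℂ] X) :
    ((Submodule.span ℂ {x : X | ∃ a : ℂ, ‖a‖ = 1 ∧ T x = a • x} : Submodule ℂ X) :
        Set X) ⊆ {x : X | IsIPStarRecurrentVec (⇑T) x} ∧
    (Dense ((Submodule.span ℂ {x : X | ∃ a : ℂ, ‖a‖ = 1 ∧ T x = a • x} :
        Submodule ℂ X) : Set X) →
      Dense {x : X | IsIPStarRecurrentVec (⇑T) x} ∧
      Dense {x : X | IsUniformlyRecurrentVec (⇑T) x}) := by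
  refine ⟨fun x hx => isIPStarRecurrentVec_of_mem_span_unimodular_eigenvectors T hx,
    fun hdense => ?_⟩
  have hIPStar := hdense.mono fun x hx =>
    isIPStarRecurrentVec_of_mem_span_unimodular_eigenvectors T hx
  exact ⟨hIPStar, hIPStar.mono fun x hx U hU => (hx U hU).syndetic⟩

theorem stmt18 {X : Type*} [AddCommGroup X] [Module ℂ X]
    [UniformSpace X] [IsUniformAddGroup X] [ContinuousSMul ℂ X] [CompleteSpace X]
    [TopologicalSpace.MetrizableSpace X] [Module ℝ X] [IsScalarTower ℝ ℂ X]
    [LocallyConvexSpace ℝ X] (T : X →L[ℂ] X) :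
    ((Submodule.span ℂ {x : X | ∃ a : ℂ, ‖a‖ = 1 ∧ T x = a • x} : Submodule ℂ X) :
        Set X) ⊆ {x : X | IsIPStarRecurrentVec (⇑T) x} ∧
    (Dense ((Submodule.span ℂ {x : X | ∃ a : ℂ, ‖a‖ = 1 ∧ T x = a • x} :
        Submodule ℂ X) : Set X) →
      Dense {x : X | IsIPStarRecurrentVec (⇑T) x} ∧
      Dense {x : X | IsUniformlyRecurrentVec (⇑T) x}) :=
  stmt18_general T
end
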